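/- arXiv:1808.01986 — 3 statements merged into one kernel-verified Lean document; each statement's English description precedes it below -/
import Mathlib

section
/- The standard normal CDF Φ is log-concave on ℝ: Φ(x) > 0 for all x, and log Φ is concave. -/
open MeasureTheory Real

noncomputable def Phi (x : ℝ) : ℝ :=
  (Real.sqrt (2 * Real.pi))⁻¹ * ∫ z in Set.Iic x, Real.exp (-z ^ 2 / 2)

/-!
With `g z = exp (-z ^ 2 / 2)` and `G x = ∫ z in Iic x, g z`, the derivative of `log G` is `g / G`,
so log-concavity amounts to `g / G` being antitone. Since `g' z = -z g z`, this is the inequality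
`x G x + g x ≥ 0`, and integrating `g' = -z g` over `Iic x` shows that
`x G x + g x = ∫ z in Iic x, (x - z) g z`, whose integrand is nonnegative.
-/

open Set

theorem hasDerivAt_integral_Iic {E : Type*} [NormedAddCommGroup E] [NormedSpace ℝ E]
    [CompleteSpace E] {f : ℝ → E} (hf : Integrable f) {x : ℝ} (hx : ContinuousAt f x) :
    HasDerivAt (fun y => ∫ z in Iic y, f z) (f x) x := by
  have hsplit : (fun y => ∫ z in Iic y, f z)
      = fun y => (∫ z in Iic 0, f z) + ∫ z in 0..y, f z := by
    funext y
    rw [← intervalIntegral.integral_Iic_sub_Iic hf.integrableOn hf.integrableOn, add_sub_cancel]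
  rw [hsplit]
  exact (intervalIntegral.integral_hasDerivAt_right hf.intervalIntegrable
    hf.aestronglyMeasurable.stronglyMeasurableAtFilter hx).const_add _

theorem integrable_exp_neg_sq_div_two : Integrable fun z : ℝ => exp (-z ^ 2 / 2) := by
  convert integrable_exp_neg_mul_sq (by norm_num : (0 : ℝ) < 1 / 2) using 2 with z
  ring_nf

theorem integrable_mul_exp_neg_sq_div_two : Integrable fun z : ℝ => z * exp (-z ^ 2 / 2) := by
  convert integrable_mul_exp_neg_mul_sq (by norm_num : (0 : ℝ) < 1 / 2) using 2 with z
  ring_nf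

theorem hasDerivAt_exp_neg_sq_div_two (x : ℝ) :
    HasDerivAt (fun z : ℝ => exp (-z ^ 2 / 2)) (-x * exp (-x ^ 2 / 2)) x := by
  have hinner : HasDerivAt (fun z : ℝ => -z ^ 2 / 2) (-x) x :=
    ((hasDerivAt_pow 2 x).fun_neg.div_const 2).congr_deriv (by ring)
  exact hinner.exp.congr_deriv (by ring)

theorem integral_Iic_mul_exp_neg_sq_div_two (x : ℝ) :
    ∫ z in Iic x, z * exp (-z ^ 2 / 2) = -exp (-x ^ 2 / 2) := by
  have hderiv : ∀ z ∈ Iic x,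
      HasDerivAt (fun z : ℝ => -exp (-z ^ 2 / 2)) (z * exp (-z ^ 2 / 2)) z := fun z _ =>
    (hasDerivAt_exp_neg_sq_div_two z).fun_neg.congr_deriv (by ring)
  have hlim := tendsto_zero_of_hasDerivAt_of_integrableOn_Iic hderiv
    integrable_mul_exp_neg_sq_div_two.integrableOn integrable_exp_neg_sq_div_two.neg.integrableOn
  rw [integral_Iic_of_hasDerivAt_of_tendsto' hderiv
    integrable_mul_exp_neg_sq_div_two.integrableOn hlim, sub_zero]

noncomputable def gaussIntegralIic (x : ℝ) : ℝ := ∫ z in Iic x, exp (-z ^ 2 / 2)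

theorem gaussIntegralIic_pos (x : ℝ) : 0 < gaussIntegralIic x := by
  rw [gaussIntegralIic, setIntegral_pos_iff_support_of_nonneg_ae
    (Filter.Eventually.of_forall fun z => (exp_pos _).le)
    integrable_exp_neg_sq_div_two.integrableOn]
  simp [Function.support, exp_ne_zero]

theorem hasDerivAt_gaussIntegralIic (x : ℝ) :
    HasDerivAt gaussIntegralIic (exp (-x ^ 2 / 2)) x :=
  hasDerivAt_integral_Iic integrable_exp_neg_sq_div_two (by fun_prop)

theorem mul_gaussIntegralIic_add_exp_nonneg (x : ℝ) :
    0 ≤ x * gaussIntegralIic x + exp (-x ^ 2 / 2) := by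
  have hrepr : x * gaussIntegralIic x + exp (-x ^ 2 / 2)
      = ∫ z in Iic x, (x - z) * exp (-z ^ 2 / 2) := by
    simp_rw [sub_mul]
    rw [integral_sub (integrable_exp_neg_sq_div_two.const_mul x).integrableOn
      integrable_mul_exp_neg_sq_div_two.integrableOn, integral_const_mul,
      integral_Iic_mul_exp_neg_sq_div_two, gaussIntegralIic, sub_neg_eq_add]
  rw [hrepr]
  exact setIntegral_nonneg measurableSet_Iic fun z hz =>
    mul_nonneg (sub_nonneg.2 hz) (exp_pos _).le

theorem antitone_exp_div_gaussIntegralIic :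
    Antitone fun x => exp (-x ^ 2 / 2) / gaussIntegralIic x := by
  have hderiv := fun x =>
    (hasDerivAt_exp_neg_sq_div_two x).fun_div (hasDerivAt_gaussIntegralIic x)
      (gaussIntegralIic_pos x).ne'
  refine antitone_of_deriv_nonpos (fun x => (hderiv x).differentiableAt) fun x => ?_
  rw [(hderiv x).deriv]
  have hnum : -x * exp (-x ^ 2 / 2) * gaussIntegralIic x - exp (-x ^ 2 / 2) * exp (-x ^ 2 / 2)
      = -(exp (-x ^ 2 / 2) * (x * gaussIntegralIic x + exp (-x ^ 2 / 2))) := by ring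
  rw [hnum]
  exact div_nonpos_of_nonpos_of_nonneg
    (neg_nonpos.2 (mul_nonneg (exp_pos _).le (mul_gaussIntegralIic_add_exp_nonneg x)))
    (sq_nonneg _)

theorem concaveOn_log_gaussIntegralIic :
    ConcaveOn ℝ univ fun x => log (gaussIntegralIic x) := by
  have hderiv := fun x =>
    (hasDerivAt_gaussIntegralIic x).log (gaussIntegralIic_pos x).ne'
  refine Antitone.concaveOn_univ_of_deriv (fun x => (hderiv x).differentiableAt) ?_
  rw [funext fun x => (hderiv x).deriv]
  exact antitone_exp_div_gaussIntegralIic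

theorem stmt1 :
    (∀ x : ℝ, 0 < Phi x) ∧
    ConcaveOn ℝ Set.univ (fun x => Real.log (Phi x)) := by
  have hc : 0 < (Real.sqrt (2 * Real.pi))⁻¹ := by positivity
  have hPhi : ∀ x, Phi x = (Real.sqrt (2 * Real.pi))⁻¹ * gaussIntegralIic x := fun _ => rfl
  refine ⟨fun x => hPhi x ▸ mul_pos hc (gaussIntegralIic_pos x), ?_⟩
  have hlog : (fun x => log (Phi x))
      = fun x => log (Real.sqrt (2 * Real.pi))⁻¹ + log (gaussIntegralIic x) :=
    funext fun x => by rw [hPhi, log_mul hc.ne' (gaussIntegralIic_pos x).ne']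
  rw [hlog]
  exact (concaveOn_const _ convex_univ).add concaveOn_log_gaussIntegralIic
end

section
/- Let C, V > 0, δ₁ = 1.545, and n ≥ 9δ₁²V/C². Then the function k ↦ (k/n)·P̂_c(k), where P̂_c(k) = 1 if (nC−k)/√(nV) ≥ δ₁, P̂_c(k) = ((nC−k)/√(nV))/(2δ₁) + 1/2 if −δ₁ ≤ (nC−k)/√(nV) < δ₁, and P̂_c(k) = 0 otherwise, is maximized over k > 0 at k* = nC − δ₁√(nV). -/
/-
Write `s = √(nV)` and `k* = nC - δ₁ s`. Left of `k*` the success probability is `1`, so the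
throughput `k/n` increases up to `k*`; right of `k* + 2δ₁ s` it is `0`. On the linear ramp in
between, `k = k* + t` with `0 < t ≤ 2δ₁ s`, and `k · P̂(k) - k* = t (3δ₁ s - nC - t) / (2δ₁ s)`,
which is nonpositive as soon as `nC ≥ 3δ₁ s`; that is exactly the blocklength condition
`n ≥ 9δ₁²V/C²`.
-/

/-- The linearized success probability `P̂_c` as a function of the normalized gap `z`. -/
noncomputable def clippedRamp (δ z : ℝ) : ℝ :=
  if δ ≤ z then 1 else if -δ ≤ z then z / (2 * δ) + 1 / 2 else 0

lemma clippedRamp_sub_sub_div {δ s : ℝ} (hs : s ≠ 0) (a : ℝ) :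
    clippedRamp δ ((a - (a - δ * s)) / s) = 1 := by
  rw [sub_sub_cancel, mul_div_cancel_right₀ _ hs, clippedRamp, if_pos le_rfl]

lemma mul_clippedRamp_sub_div_le {δ s a : ℝ} (hδ : 0 < δ) (hs : 0 < s) (ha : 3 * δ * s ≤ a)
    (k : ℝ) : k * clippedRamp δ ((a - k) / s) ≤ a - δ * s := by
  unfold clippedRamp
  split_ifs with h_top h_ramp
  · rw [le_div_iff₀ hs] at h_top
    linarith
  · rw [not_le, div_lt_iff₀ hs] at h_top
    rw [le_div_iff₀ hs] at h_ramp
    have h_lin : (a - k) / s / (2 * δ) + 1 / 2 = (a - k + δ * s) / (2 * δ * s) := by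
      field_simp
    rw [h_lin, mul_div_assoc', div_le_iff₀ (by positivity)]
    nlinarith [mul_nonneg (by linarith : 0 ≤ k - (a - δ * s))
      (by linarith : 0 ≤ a - 3 * δ * s + (k - (a - δ * s)))]
  · nlinarith [mul_pos hδ hs]

lemma three_mul_mul_sqrt_le {C V n δ : ℝ} (hC : 0 < C) (hV : 0 ≤ V) (hδ : 0 ≤ δ)
    (hn : 9 * δ ^ 2 * V / C ^ 2 ≤ n) : 3 * δ * Real.sqrt (n * V) ≤ n * C := by
  have hn0 : 0 ≤ n := (by positivity : 0 ≤ 9 * δ ^ 2 * V / C ^ 2).trans hn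
  have hnC2 : 9 * δ ^ 2 * (n * V) ≤ (n * C) ^ 2 := by
    have := (div_le_iff₀ (by positivity : (0 : ℝ) < C ^ 2)).mp hn
    nlinarith
  calc 3 * δ * Real.sqrt (n * V) = Real.sqrt (9 * δ ^ 2 * (n * V)) := by
        rw [show (9 : ℝ) * δ ^ 2 = (3 * δ) ^ 2 by ring, Real.sqrt_mul (by positivity : 0 ≤ (3 * δ) ^ 2),
          Real.sqrt_sq (by positivity)]
    _ ≤ Real.sqrt ((n * C) ^ 2) := Real.sqrt_le_sqrt hnC2
    _ = n * C := Real.sqrt_sq (by positivity)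

theorem stmt8 (C V n : ℝ) (hC : 0 < C) (hV : 0 < V)
    (δ₁ : ℝ) (hδ : δ₁ = 1.545)
    (hn : 9 * δ₁ ^ 2 * V / C ^ 2 ≤ n)
    (P : ℝ → ℝ)
    (hP : ∀ k, P k =
      if δ₁ ≤ (n * C - k) / Real.sqrt (n * V) then 1
      else if -δ₁ ≤ (n * C - k) / Real.sqrt (n * V) then
        ((n * C - k) / Real.sqrt (n * V)) / (2 * δ₁) + 1 / 2
      else 0)
    (kstar : ℝ) (hk : kstar = n * C - δ₁ * Real.sqrt (n * V)) :
    ∀ k ∈ Set.Ioi (0 : ℝ), (k / n) * P k ≤ (kstar / n) * P kstar := by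
  intro k _
  have hδ₁ : 0 < δ₁ := by rw [hδ]; norm_num
  have hn0 : 0 < n := (by positivity : 0 < 9 * δ₁ ^ 2 * V / C ^ 2).trans_le hn
  have hs : 0 < Real.sqrt (n * V) := Real.sqrt_pos.mpr (by positivity)
  have hP' : ∀ k, P k = clippedRamp δ₁ ((n * C - k) / Real.sqrt (n * V)) := hP
  rw [hP', hP', hk, clippedRamp_sub_sub_div hs.ne', mul_one, div_mul_eq_mul_div]
  exact div_le_div_of_nonneg_right (mul_clippedRamp_sub_div_le hδ₁ hs
    (three_mul_mul_sqrt_le hC hV.le hδ₁.le hn) k) hn0.le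
end

section
/- If P_cSD, P_cSR ∈ [0,1], P_cRD ∈ (0,1], and P_eSD = 1 − P_cSD, then the cooperative throughput u^CC = [P_cSD + P_eSD·P_cSR]·P_cRD / [P_cRD + P_eSD·P_cSR] satisfies u^CC ≥ P_cSD·P_cRD / (P_cRD + P_cSR); moreover, if P_cRD = 1 then u^CC ≥ P_cSD, i.e., cooperation with a perfect relay-destination channel never decreases throughput relative to no cooperation. -/
theorem stmt12 (PcSD PcSR PcRD PeSD : ℝ)
    (h1 : PcSD ∈ Set.Icc (0:ℝ) 1) (h2 : PcSR ∈ Set.Icc (0:ℝ) 1)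
    (h3 : PcRD ∈ Set.Ioc (0:ℝ) 1)
    (he : PeSD = 1 - PcSD) :
    PcSD * PcRD / (PcRD + PcSR) ≤
      (PcSD + PeSD * PcSR) * PcRD / (PcRD + PeSD * PcSR) ∧
    (PcRD = 1 →
      PcSD ≤ (PcSD + PeSD * PcSR) * PcRD / (PcRD + PeSD * PcSR)) := by
  obtain ⟨hSD0, hSD1⟩ := h1
  obtain ⟨hSR0, hSR1⟩ := h2
  obtain ⟨hRD0, hRD1⟩ := h3
  subst he
  have hd2 : 0 < PcRD + (1 - PcSD) * PcSR := by nlinarith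
  constructor
  · have hd1 : 0 < PcRD + PcSR := by linarith
    rw [div_le_div_iff₀ hd1 hd2]
    nlinarith [mul_nonneg (mul_nonneg hSR0 (sq_nonneg PcSD)) hRD0.le,
      mul_nonneg (mul_nonneg (mul_nonneg hSR0 (sub_nonneg.2 hSD1)) hRD0.le) hRD0.le,
      mul_nonneg (mul_nonneg (mul_nonneg hSR0 (sub_nonneg.2 hSD1)) hSR0) hRD0.le]
  · intro h; subst h
    rw [le_div_iff₀ hd2]
    nlinarith [mul_nonneg hSR0 (sub_nonneg.2 hSD1)]
end
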